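/- Suppose q is even, i.e. q(1−x) = q(x) for almost every x ∈ [0,1]. Then for every λ ∈ ℂ one has ϑ(1,λ) = φ′(1,λ) = Δ(λ), and consequently Δ₀(λ) = (9·Δ(λ)² − 5)/4. -/

import Mathlib

open MeasureTheory

noncomputable section

/-- `(y, y′)` is a solution of `−y″ + q·y = λ·y` on `[0,1]`,
in the integral-equation sense. -/
def IsSol (q : ℝ → ℝ) (lam : ℂ) (y y' : ℝ → ℂ) : Prop :=
  (∀ x ∈ Set.Icc (0:ℝ) 1, y x = y 0 + ∫ t in (0:ℝ)..x, y' t) ∧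
  (∀ x ∈ Set.Icc (0:ℝ) 1, y' x = y' 0 + ∫ t in (0:ℝ)..x, ((q t : ℂ) - lam) * y t)

open Set intervalIntegral Filter

section Aux

variable {𝕜 : Type*} [RCLike 𝕜]

/-- Fubini on the two triangles of a square. -/
lemma triangle_aux {b : ℝ} (hb : 0 ≤ b) {f g : ℝ → 𝕜}
    (hf : IntegrableOn f (Set.Ioc 0 b)) (hg : IntegrableOn g (Set.Ioc 0 b)) :
    (∫ t in Set.Ioc (0:ℝ) b, f t * ∫ s in Set.Ioc (0:ℝ) t, g s)
      + ∫ s in Set.Ioc (0:ℝ) b, (∫ t in Set.Ioc (0:ℝ) s, f t) * g s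
    = (∫ t in Set.Ioc (0:ℝ) b, f t) * ∫ s in Set.Ioc (0:ℝ) b, g s := by
  set μ : Measure ℝ := volume.restrict (Set.Ioc 0 b) with hμ
  have hfμ : Integrable f μ := hf
  have hgμ : Integrable g μ := hg
  have hprod : Integrable (fun p : ℝ × ℝ => f p.1 * g p.2) (μ.prod μ) := hfμ.mul_prod hgμ
  have hS : MeasurableSet {p : ℝ × ℝ | p.2 ≤ p.1} :=
    measurableSet_le measurable_snd measurable_fst
  have hsplit :
      (∫ p in {p : ℝ × ℝ | p.2 ≤ p.1}, f p.1 * g p.2 ∂μ.prod μ)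
        + ∫ p in {p : ℝ × ℝ | p.2 ≤ p.1}ᶜ, f p.1 * g p.2 ∂μ.prod μ
      = (∫ t, f t ∂μ) * ∫ s, g s ∂μ := by
    rw [integral_add_compl hS hprod, integral_prod_mul]
  have h1 : (∫ p in {p : ℝ × ℝ | p.2 ≤ p.1}, f p.1 * g p.2 ∂μ.prod μ)
      = ∫ t in Set.Ioc (0:ℝ) b, f t * ∫ s in Set.Ioc (0:ℝ) t, g s := by
    rw [← MeasureTheory.integral_indicator hS, integral_prod _ (hprod.indicator hS)]
    refine setIntegral_congr_fun measurableSet_Ioc (fun t ht => ?_)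
    have h2 : ∀ s : ℝ, ({p : ℝ × ℝ | p.2 ≤ p.1}.indicator (fun p => f p.1 * g p.2)) (t, s)
        = (Set.Iic t).indicator (fun s => f t * g s) s := by
      intro s
      by_cases h : s ≤ t <;> simp [Set.indicator, h]
    simp_rw [h2]
    rw [MeasureTheory.integral_indicator measurableSet_Iic, hμ,
      Measure.restrict_restrict measurableSet_Iic, MeasureTheory.integral_const_mul]
    have hset : Set.Iic t ∩ Set.Ioc 0 b = Set.Ioc 0 t := by
      ext x
      simp only [mem_inter_iff, mem_Iic, mem_Ioc]
      constructor
      · rintro ⟨h1, h2, h3⟩; exact ⟨h2, h1⟩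
      · rintro ⟨h1, h2⟩; exact ⟨h2, h1, h2.trans ht.2⟩
    rw [hset]
  have h2 : (∫ p in {p : ℝ × ℝ | p.2 ≤ p.1}ᶜ, f p.1 * g p.2 ∂μ.prod μ)
      = ∫ s in Set.Ioc (0:ℝ) b, (∫ t in Set.Ioc (0:ℝ) s, f t) * g s := by
    have hSc : MeasurableSet {p : ℝ × ℝ | p.2 ≤ p.1}ᶜ := hS.compl
    rw [← MeasureTheory.integral_indicator hSc, integral_prod_symm _ (hprod.indicator hSc)]
    refine setIntegral_congr_fun measurableSet_Ioc (fun s hs => ?_)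
    have h3 : ∀ t : ℝ, ({p : ℝ × ℝ | p.2 ≤ p.1}ᶜ.indicator (fun p => f p.1 * g p.2)) (t, s)
        = (Set.Iio s).indicator (fun t => f t * g s) t := by
      intro t
      by_cases h : t < s
      · simp [Set.indicator, h, not_le.mpr h]
      · simp [Set.indicator, h, not_lt.mp h]
    simp_rw [h3]
    rw [MeasureTheory.integral_indicator measurableSet_Iio, hμ,
      Measure.restrict_restrict measurableSet_Iio, MeasureTheory.integral_mul_const]
    have hset : Set.Iio s ∩ Set.Ioc 0 b = Set.Ioo 0 s := by
      ext x
      simp only [mem_inter_iff, mem_Iio, mem_Ioo, mem_Ioc]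
      constructor
      · rintro ⟨h1, h2, h3⟩; exact ⟨h2, h1⟩
      · rintro ⟨h1, h2⟩; exact ⟨h2, h1, (le_of_lt h2).trans hs.2⟩
    rw [hset, ← integral_Ioc_eq_integral_Ioo]
  rw [h1, h2] at hsplit
  exact hsplit

lemma mul_cont_integrable {b : ℝ} (hb : 0 ≤ b) {f φ : ℝ → 𝕜}
    (hf : IntegrableOn f (Set.Ioc 0 b)) (hφ : ContinuousOn φ (Set.Icc 0 b)) :
    IntegrableOn (fun t => f t * φ t) (Set.Ioc 0 b) := by
  obtain ⟨C, hC⟩ := (isCompact_Icc (a := (0:ℝ)) (b := b)).exists_bound_of_continuousOn hφ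
  have hm : AEStronglyMeasurable φ (volume.restrict (Set.Ioc 0 b)) :=
    (hφ.aestronglyMeasurable measurableSet_Icc).mono_measure
      (Measure.restrict_mono Set.Ioc_subset_Icc_self le_rfl)
  have hbd : ∀ᵐ t ∂(volume.restrict (Set.Ioc 0 b)), ‖φ t‖ ≤ C :=
    (ae_restrict_iff' measurableSet_Ioc).2
      (Filter.Eventually.of_forall fun t ht => hC t (Set.Ioc_subset_Icc_self ht))
  have h := hf.bdd_mul hm hbd
  exact h.congr (Filter.Eventually.of_forall fun t => mul_comm _ _)

lemma cont_mul_integrable {b : ℝ} (hb : 0 ≤ b) {f φ : ℝ → 𝕜}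
    (hf : IntegrableOn f (Set.Ioc 0 b)) (hφ : ContinuousOn φ (Set.Icc 0 b)) :
    IntegrableOn (fun t => φ t * f t) (Set.Ioc 0 b) :=
  (mul_cont_integrable hb hf hφ).congr (Filter.Eventually.of_forall fun t => mul_comm _ _)

lemma cont_primitive {b : ℝ} (hb : 0 ≤ b) {f : ℝ → 𝕜} (hf : IntegrableOn f (Set.Ioc 0 b)) :
    ContinuousOn (fun x => ∫ t in (0:ℝ)..x, f t) (Set.Icc 0 b) := by
  have h := intervalIntegral.continuousOn_primitive_interval'
    (b₁ := (0:ℝ)) (b₂ := b) (a := (0:ℝ)) (μ := volume)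
    ((intervalIntegrable_iff_integrableOn_Ioc_of_le hb).2 hf) (by rw [Set.uIcc_of_le hb]; exact Set.left_mem_Icc.2 hb)
  rwa [Set.uIcc_of_le hb] at h


/-- Integration by parts for two "primitives of L¹ functions". -/
lemma ibp {b : ℝ} (hb : 0 ≤ b) {f g F G : ℝ → 𝕜} {cF cG : 𝕜}
    (hf : IntegrableOn f (Set.Ioc 0 b)) (hg : IntegrableOn g (Set.Ioc 0 b))
    (hF : ∀ x ∈ Set.Icc (0:ℝ) b, F x = cF + ∫ t in (0:ℝ)..x, f t)
    (hG : ∀ x ∈ Set.Icc (0:ℝ) b, G x = cG + ∫ t in (0:ℝ)..x, g t) :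
    F b * G b = cF * cG + ∫ t in (0:ℝ)..b, (f t * G t + F t * g t) := by
  have hmem : b ∈ Set.Icc (0:ℝ) b := Set.right_mem_Icc.2 hb
  set Φ : ℝ → 𝕜 := fun x => ∫ t in (0:ℝ)..x, f t with hΦdef
  set Γ : ℝ → 𝕜 := fun x => ∫ t in (0:ℝ)..x, g t with hΓdef
  have hΦc : ContinuousOn Φ (Set.Icc 0 b) := cont_primitive hb hf
  have hΓc : ContinuousOn Γ (Set.Icc 0 b) := cont_primitive hb hg
  -- rewrite the interval integral as a set integral and substitute F, G
  have key : ∫ t in (0:ℝ)..b, (f t * G t + F t * g t)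
      = ∫ t in Set.Ioc (0:ℝ) b,
          ((f t * cG + cF * g t) + (f t * Γ t + Φ t * g t)) := by
    rw [intervalIntegral.integral_of_le hb]
    refine setIntegral_congr_fun measurableSet_Ioc (fun t ht => ?_)
    have ht' : t ∈ Set.Icc (0:ℝ) b := Set.Ioc_subset_Icc_self ht
    rw [hF t ht', hG t ht']
    ring
  rw [key]
  have i1 : IntegrableOn (fun t => f t * cG + cF * g t) (Set.Ioc 0 b) :=
    (hf.mul_const cG).add (hg.const_mul cF)
  have i2 : IntegrableOn (fun t => f t * Γ t) (Set.Ioc 0 b) := mul_cont_integrable hb hf hΓc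
  have i3 : IntegrableOn (fun t => Φ t * g t) (Set.Ioc 0 b) := cont_mul_integrable hb hg hΦc
  have eA : (∫ t in Set.Ioc (0:ℝ) b, ((f t * cG + cF * g t) + (f t * Γ t + Φ t * g t)))
      = ((∫ t in Set.Ioc (0:ℝ) b, (f t * cG + cF * g t))
        + ∫ t in Set.Ioc (0:ℝ) b, (f t * Γ t + Φ t * g t)) := integral_add i1 (i2.add i3)
  have eB : (∫ t in Set.Ioc (0:ℝ) b, (f t * cG + cF * g t))
      = ((∫ t in Set.Ioc (0:ℝ) b, f t * cG) + ∫ t in Set.Ioc (0:ℝ) b, cF * g t) :=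
    integral_add (hf.mul_const cG) (hg.const_mul cF)
  have eC : (∫ t in Set.Ioc (0:ℝ) b, (f t * Γ t + Φ t * g t))
      = ((∫ t in Set.Ioc (0:ℝ) b, f t * Γ t) + ∫ t in Set.Ioc (0:ℝ) b, Φ t * g t) :=
    integral_add i2 i3
  rw [eA, eB, eC, MeasureTheory.integral_mul_const, MeasureTheory.integral_const_mul]
  have htri :
      (∫ t in Set.Ioc (0:ℝ) b, f t * Γ t) + ∫ t in Set.Ioc (0:ℝ) b, Φ t * g t
      = (∫ t in Set.Ioc (0:ℝ) b, f t) * ∫ s in Set.Ioc (0:ℝ) b, g s := by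
    have := triangle_aux hb hf hg
    have hΓ' : ∀ t ∈ Set.Ioc (0:ℝ) b, Γ t = ∫ s in Set.Ioc (0:ℝ) t, g s := fun t ht => by
      rw [hΓdef]; exact intervalIntegral.integral_of_le ht.1.le
    have hΦ' : ∀ t ∈ Set.Ioc (0:ℝ) b, Φ t = ∫ s in Set.Ioc (0:ℝ) t, f s := fun t ht => by
      rw [hΦdef]; exact intervalIntegral.integral_of_le ht.1.le
    rw [setIntegral_congr_fun measurableSet_Ioc (fun t ht => by simp only [hΓ' t ht] :
          Set.EqOn (fun t => f t * Γ t) (fun t => f t * ∫ s in Set.Ioc (0:ℝ) t, g s) _),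
        setIntegral_congr_fun measurableSet_Ioc (fun t ht => by simp only [hΦ' t ht] :
          Set.EqOn (fun t => Φ t * g t) (fun t => (∫ s in Set.Ioc (0:ℝ) t, f s) * g t) _)]
    exact this
  rw [htri, hF b hmem, hG b hmem,
    intervalIntegral.integral_of_le hb (f := f), intervalIntegral.integral_of_le hb (f := g)]
  ring

lemma pow_primitive {b : ℝ} (hb : 0 ≤ b) {m : ℝ → ℝ} (hm : IntegrableOn m (Set.Ioc 0 b)) :
    ∀ k : ℕ, ∀ x ∈ Set.Icc (0:ℝ) b,
      (∫ t in (0:ℝ)..x, m t) ^ (k+1)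
        = ((k:ℝ)+1) * ∫ t in (0:ℝ)..x, m t * (∫ s in (0:ℝ)..t, m s) ^ k := by
  intro k
  induction k with
  | zero =>
    intro x hx
    simp
  | succ k ih =>
    intro x hx
    have hx0 : (0:ℝ) ≤ x := hx.1
    have hmx : IntegrableOn m (Set.Ioc 0 x) := hm.mono_set (Set.Ioc_subset_Ioc le_rfl hx.2)
    have hMc : ContinuousOn (fun z => ∫ t in (0:ℝ)..z, m t) (Set.Icc 0 x) := cont_primitive hx0 hmx
    have hf : IntegrableOn (fun t => ((k:ℝ)+1) * (m t * (∫ s in (0:ℝ)..t, m s) ^ k))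
        (Set.Ioc 0 x) := (mul_cont_integrable hx0 hmx (hMc.pow k)).const_mul _
    have hF : ∀ z ∈ Set.Icc (0:ℝ) x,
        (∫ t in (0:ℝ)..z, m t) ^ (k+1)
          = 0 + ∫ t in (0:ℝ)..z, ((k:ℝ)+1) * (m t * (∫ s in (0:ℝ)..t, m s) ^ k) := by
      intro z hz
      rw [zero_add, intervalIntegral.integral_const_mul]
      exact ih z ⟨hz.1, hz.2.trans hx.2⟩
    have hG : ∀ z ∈ Set.Icc (0:ℝ) x, (∫ t in (0:ℝ)..z, m t) = 0 + ∫ t in (0:ℝ)..z, m t :=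
      fun z _ => (zero_add _).symm
    have key := ibp hx0 hf hmx hF hG
    rw [zero_mul, zero_add] at key
    have hcongr : ∫ t in (0:ℝ)..x,
        (((k:ℝ)+1) * (m t * (∫ s in (0:ℝ)..t, m s) ^ k) * (∫ s in (0:ℝ)..t, m s)
          + (∫ s in (0:ℝ)..t, m s) ^ (k+1) * m t)
        = ∫ t in (0:ℝ)..x, ((k:ℝ)+2) * (m t * (∫ s in (0:ℝ)..t, m s) ^ (k+1)) := by
      refine intervalIntegral.integral_congr (fun t _ => ?_)
      ring
    rw [hcongr, intervalIntegral.integral_const_mul] at key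
    calc (∫ t in (0:ℝ)..x, m t) ^ (k+1+1)
        = (∫ t in (0:ℝ)..x, m t) ^ (k+1) * (∫ t in (0:ℝ)..x, m t) := by ring
      _ = ((k:ℝ)+2) * ∫ t in (0:ℝ)..x, m t * (∫ s in (0:ℝ)..t, m s) ^ (k+1) := key
      _ = (((k+1:ℕ):ℝ)+1) * ∫ t in (0:ℝ)..x, m t * (∫ s in (0:ℝ)..t, m s) ^ (k+1) := by
          push_cast; rw [show ((k:ℝ)+2) = (k:ℝ)+1+1 from by ring]

set_option maxHeartbeats 1000000 in
lemma gronwall {b A B : ℝ} (hb : 0 ≤ b) {u m : ℝ → ℝ}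
    (hu : ContinuousOn u (Set.Icc 0 b))
    (hm : IntegrableOn m (Set.Ioc 0 b)) (hm1 : ∀ t, 1 ≤ m t)
    (hA : 0 ≤ A) (hB0 : 0 ≤ B) (hB : ∀ x ∈ Set.Icc (0:ℝ) b, u x ≤ B)
    (hint : ∀ x ∈ Set.Icc (0:ℝ) b, u x ≤ A + ∫ t in (0:ℝ)..x, m t * u t) :
    ∀ x ∈ Set.Icc (0:ℝ) b, u x ≤ A * Real.exp (∫ t in (0:ℝ)..b, m t) := by
  set M : ℝ → ℝ := fun z => ∫ t in (0:ℝ)..z, m t with hMdef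
  have hmnn : ∀ t, (0:ℝ) ≤ m t := fun t => zero_le_one.trans (hm1 t)
  have hMc : ContinuousOn M (Set.Icc 0 b) := cont_primitive hb hm
  have hM0 : ∀ x ∈ Set.Icc (0:ℝ) b, 0 ≤ M x := fun x hx =>
    intervalIntegral.integral_nonneg hx.1 (fun t _ => hmnn t)
  have hmib : IntervalIntegrable m volume 0 b :=
    (intervalIntegrable_iff_integrableOn_Ioc_of_le hb).2 hm
  have hMmono : ∀ x ∈ Set.Icc (0:ℝ) b, M x ≤ M b := by
    intro x hx
    have h1 : IntervalIntegrable m volume 0 x := hmib.mono_set (by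
      rw [Set.uIcc_of_le hx.1, Set.uIcc_of_le hb]; exact Set.Icc_subset_Icc le_rfl hx.2)
    have h2 : IntervalIntegrable m volume x b := hmib.mono_set (by
      rw [Set.uIcc_of_le hx.2, Set.uIcc_of_le hb]; exact Set.Icc_subset_Icc hx.1 le_rfl)
    have := intervalIntegral.integral_add_adjacent_intervals h1 h2
    have hpos : 0 ≤ ∫ t in x..b, m t :=
      intervalIntegral.integral_nonneg hx.2 (fun t _ => hmnn t)
    rw [hMdef]
    simp only []
    linarith [this]
  -- integrability of m * (M ^ k) and m * u on subintervals
  have hMk_int : ∀ (k : ℕ) (x : ℝ), x ∈ Set.Icc (0:ℝ) b →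
      IntervalIntegrable (fun t => m t * M t ^ k) volume 0 x := by
    intro k x hx
    have hmx : IntegrableOn m (Set.Ioc 0 x) := hm.mono_set (Set.Ioc_subset_Ioc le_rfl hx.2)
    exact (intervalIntegrable_iff_integrableOn_Ioc_of_le hx.1).2
      (mul_cont_integrable hx.1 hmx ((cont_primitive hx.1 hmx).pow k))
  have hmu_int : ∀ x ∈ Set.Icc (0:ℝ) b, IntervalIntegrable (fun t => m t * u t) volume 0 x := by
    intro x hx
    have hmx : IntegrableOn m (Set.Ioc 0 x) := hm.mono_set (Set.Ioc_subset_Ioc le_rfl hx.2)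
    exact (intervalIntegrable_iff_integrableOn_Ioc_of_le hx.1).2
      (mul_cont_integrable hx.1 hmx (hu.mono (Set.Icc_subset_Icc le_rfl hx.2)))
  -- the iterated bound
  have key : ∀ n : ℕ, ∀ x ∈ Set.Icc (0:ℝ) b,
      u x ≤ A * (∑ k ∈ Finset.range n, M x ^ k / k.factorial) + B * M x ^ n / n.factorial := by
    intro n
    induction n with
    | zero =>
      intro x hx
      simpa using hB x hx
    | succ n ih =>
      intro x hx
      have hx0 : (0:ℝ) ≤ x := hx.1
      -- pointwise bound of the integrand
      have hpt : ∀ t ∈ Set.Icc (0:ℝ) x, m t * u t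
          ≤ (∑ k ∈ Finset.range n, (A / k.factorial) * (m t * M t ^ k))
            + (B / n.factorial) * (m t * M t ^ n) := by
        intro t ht
        have ht' : t ∈ Set.Icc (0:ℝ) b := ⟨ht.1, ht.2.trans hx.2⟩
        have h1 : m t * u t ≤ m t *
            (A * (∑ k ∈ Finset.range n, M t ^ k / k.factorial) + B * M t ^ n / n.factorial) :=
          mul_le_mul_of_nonneg_left (ih t ht') (hmnn t)
        refine h1.trans (le_of_eq ?_)
        rw [mul_add, mul_left_comm, Finset.mul_sum, Finset.mul_sum]
        refine congrArg₂ (· + ·) (Finset.sum_congr rfl (fun k _ => by ring)) (by ring)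
      -- integrability of the upper bound
      have hub_int : IntervalIntegrable (fun t =>
          (∑ k ∈ Finset.range n, (A / k.factorial) * (m t * M t ^ k))
            + (B / n.factorial) * (m t * M t ^ n)) volume 0 x := by
        refine (intervalIntegrable_iff_integrableOn_Ioc_of_le hx0).2 ?_
        exact (integrable_finset_sum _ (fun k _ => ((hMk_int k x hx).const_mul (A / k.factorial)).1)).add
          ((hMk_int n x hx).const_mul _).1
      have hmono : (∫ t in (0:ℝ)..x, m t * u t) ≤ ∫ t in (0:ℝ)..x,
          ((∑ k ∈ Finset.range n, (A / k.factorial) * (m t * M t ^ k))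
            + (B / n.factorial) * (m t * M t ^ n)) :=
        intervalIntegral.integral_mono_on hx0 (hmu_int x hx) hub_int hpt
      -- compute the integral of the upper bound
      have hcomp : (∫ t in (0:ℝ)..x,
          ((∑ k ∈ Finset.range n, (A / k.factorial) * (m t * M t ^ k))
            + (B / n.factorial) * (m t * M t ^ n)))
          = (∑ k ∈ Finset.range n, (A / k.factorial) * (M x ^ (k+1) / ((k:ℝ)+1)))
            + (B / n.factorial) * (M x ^ (n+1) / ((n:ℝ)+1)) := by
        have hsum_ii : IntervalIntegrable (fun t => ∑ k ∈ Finset.range n,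
            (A / k.factorial) * (m t * M t ^ k)) volume 0 x :=
          (intervalIntegrable_iff_integrableOn_Ioc_of_le hx0).2
            (integrable_finset_sum _ (fun k _ => ((hMk_int k x hx).const_mul (A / k.factorial)).1))
        rw [intervalIntegral.integral_add hsum_ii ((hMk_int n x hx).const_mul _),
            intervalIntegral.integral_finset_sum (fun k _ => (hMk_int k x hx).const_mul _)]
        have hval : ∀ k : ℕ, (∫ t in (0:ℝ)..x, m t * M t ^ k) = M x ^ (k+1) / ((k:ℝ)+1) := by
          intro k
          have := pow_primitive hb hm k x hx
          have hk : ((k:ℝ)+1) ≠ 0 := by positivity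
          field_simp at this ⊢
          linarith [this]
        refine congrArg₂ (· + ·) (Finset.sum_congr rfl (fun k _ => ?_)) ?_
        · rw [intervalIntegral.integral_const_mul, hval k]
        · rw [intervalIntegral.integral_const_mul, hval n]
      -- put things together
      have hchain : u x ≤ A + ((∑ k ∈ Finset.range n, (A / k.factorial) * (M x ^ (k+1) / ((k:ℝ)+1)))
            + (B / n.factorial) * (M x ^ (n+1) / ((n:ℝ)+1))) := by
        calc u x ≤ A + ∫ t in (0:ℝ)..x, m t * u t := hint x hx
          _ ≤ A + _ := (add_le_add_iff_left A).2 (hmono.trans (le_of_eq hcomp))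
      refine hchain.trans (le_of_eq ?_)
      rw [Finset.sum_range_succ' (fun k => M x ^ k / (k.factorial:ℝ)) n]
      have hfact : ∀ k : ℕ, ((k+1).factorial : ℝ) = ((k:ℝ)+1) * (k.factorial : ℝ) := by
        intro k
        rw [Nat.factorial_succ]
        push_cast
        ring
      have hterm : ∀ k : ℕ, (A / k.factorial) * (M x ^ (k+1) / ((k:ℝ)+1))
          = A * (M x ^ (k+1) / ((k+1).factorial : ℝ)) := by
        intro k
        rw [hfact k, div_mul_div_comm, ← mul_div_assoc, mul_comm ((k.factorial:ℝ)) (((k:ℝ)+1))]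
      rw [Finset.sum_congr rfl (fun k _ => hterm k)]
      have hrem : (B / n.factorial) * (M x ^ (n+1) / ((n:ℝ)+1))
          = B * M x ^ (n+1) / ((n+1).factorial : ℝ) := by
        rw [hfact n, div_mul_div_comm, mul_comm ((n.factorial:ℝ)) (((n:ℝ)+1))]
      rw [hrem, ← Finset.mul_sum]
      norm_num [Nat.factorial]
      ring
  -- pass to the limit
  intro x hx
  have hbound : ∀ n : ℕ, u x ≤ A * Real.exp (M x) + B * (M x ^ n / n.factorial) := by
    intro n
    refine (key n x hx).trans ?_
    have h1 : (∑ k ∈ Finset.range n, M x ^ k / k.factorial) ≤ Real.exp (M x) :=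
      Real.sum_le_exp_of_nonneg (hM0 x hx) n
    have h2 : A * (∑ k ∈ Finset.range n, M x ^ k / k.factorial) ≤ A * Real.exp (M x) :=
      mul_le_mul_of_nonneg_left h1 hA
    have : B * M x ^ n / n.factorial = B * (M x ^ n / n.factorial) := by ring
    linarith [this]
  have hlim : Filter.Tendsto (fun n : ℕ => A * Real.exp (M x) + B * (M x ^ n / n.factorial))
      Filter.atTop (nhds (A * Real.exp (M x) + B * 0)) :=
    Filter.Tendsto.const_add _ ((FloorSemiring.tendsto_pow_div_factorial_atTop (M x)).const_mul B)
  have : u x ≤ A * Real.exp (M x) + B * 0 := ge_of_tendsto' hlim hbound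
  rw [mul_zero, add_zero] at this
  exact this.trans (mul_le_mul_of_nonneg_left (Real.exp_le_exp.2 (hMmono x hx)) hA)

/-- The "junk primitive" of an arbitrary function is a.e. strongly measurable on `(0,1]`. -/
lemma prim_aesm (F : ℝ → 𝕜) :
    AEStronglyMeasurable (fun x => ∫ t in (0:ℝ)..x, F t)
      (volume.restrict (Set.Ioc (0:ℝ) 1)) := by
  set P : ℝ → 𝕜 := fun x => ∫ t in (0:ℝ)..x, F t with hPdef
  set S : Set ℝ := {x | x ∈ Set.Icc (0:ℝ) 1 ∧ IntegrableOn F (Set.Ioc 0 x)} with hSdef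
  have hS0 : (0:ℝ) ∈ S := ⟨⟨le_rfl, zero_le_one⟩, by simp⟩
  have hSne : S.Nonempty := ⟨0, hS0⟩
  have hbdd : BddAbove S := ⟨1, fun x hx => hx.1.2⟩
  set c : ℝ := sSup S with hcdef
  have hc0 : 0 ≤ c := le_csSup hbdd hS0
  have hc1 : c ≤ 1 := csSup_le hSne (fun x hx => hx.1.2)
  have hlt : ∀ x ∈ Set.Icc (0:ℝ) 1, x < c → IntegrableOn F (Set.Ioc 0 x) := by
    intro x hx hxc
    obtain ⟨d, hd, hxd⟩ := exists_lt_of_lt_csSup hSne hxc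
    exact hd.2.mono_set (Set.Ioc_subset_Ioc le_rfl hxd.le)
  have hgt : ∀ x ∈ Set.Icc (0:ℝ) 1, c < x → P x = 0 := by
    intro x hx hcx
    have hnint : ¬ IntegrableOn F (Set.Ioc 0 x) := by
      intro h
      exact absurd (le_csSup hbdd (⟨hx, h⟩ : x ∈ S)) (not_le.2 hcx)
    rw [hPdef]
    simp only []
    rw [intervalIntegral.integral_of_le hx.1, integral_undef hnint]
  -- continuity on the lower region
  have hcontU : ContinuousOn P (Set.Ioc 0 1 ∩ Set.Iio c) := by
    intro x₀ hx₀
    obtain ⟨d, hd, hxd⟩ := exists_lt_of_lt_csSup hSne hx₀.2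
    have hPd : ContinuousOn P (Set.Icc 0 d) := cont_primitive hd.1.1 hd.2
    have hx₀d : x₀ ∈ Set.Icc (0:ℝ) d := ⟨hx₀.1.1.le, hxd.le⟩
    refine (hPd.continuousWithinAt hx₀d).mono_of_mem_nhdsWithin ?_
    have h1 : Set.Iio d ∈ nhdsWithin x₀ (Set.Ioc 0 1 ∩ Set.Iio c) :=
      mem_nhdsWithin_of_mem_nhds (Iio_mem_nhds hxd)
    refine Filter.mem_of_superset (Filter.inter_mem self_mem_nhdsWithin h1) ?_
    rintro z ⟨⟨hz1, _⟩, hz2⟩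
    exact ⟨hz1.1.le, hz2.le⟩
  have hA1 : AEStronglyMeasurable P (volume.restrict (Set.Ioc 0 1 ∩ Set.Iio c)) :=
    hcontU.aestronglyMeasurable (measurableSet_Ioc.inter measurableSet_Iio)
  have hA2 : AEStronglyMeasurable P (volume.restrict (Set.Ioc 0 1 ∩ Set.Ioi c)) := by
    refine (aestronglyMeasurable_const (b := (0:𝕜))).congr ?_
    rw [Filter.EventuallyEq, ae_restrict_iff' (measurableSet_Ioc.inter measurableSet_Ioi)]
    exact Filter.Eventually.of_forall (fun x hx => (hgt x ⟨hx.1.1.le, hx.1.2⟩ hx.2).symm)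
  have hA3 : AEStronglyMeasurable P (volume.restrict {c}) := by
    rw [Measure.restrict_singleton' (μ := volume)]
    exact aestronglyMeasurable_zero_measure P
  have hcover : Set.Ioc (0:ℝ) 1 ⊆ (Set.Ioc 0 1 ∩ Set.Iio c) ∪ ((Set.Ioc 0 1 ∩ Set.Ioi c) ∪ {c}) := by
    intro x hx
    rcases lt_trichotomy x c with h | h | h
    · exact Or.inl ⟨hx, h⟩
    · exact Or.inr (Or.inr (by simp [h]))
    · exact Or.inr (Or.inl ⟨hx, h⟩)
  have := ((aestronglyMeasurable_union_iff).2 ⟨hA1,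
    (aestronglyMeasurable_union_iff).2 ⟨hA2, hA3⟩⟩ :
      AEStronglyMeasurable P (volume.restrict
        ((Set.Ioc 0 1 ∩ Set.Iio c) ∪ ((Set.Ioc 0 1 ∩ Set.Ioi c) ∪ {c}))))
  exact this.mono_measure (Measure.restrict_mono hcover le_rfl)

set_option maxHeartbeats 1000000 in
lemma regular (q : ℝ → ℝ) (hq : MemLp q 2 (volume.restrict (Set.Icc (0:ℝ) 1)))
    (lam : ℂ) (y y' : ℝ → ℂ) (h : IsSol q lam y y') :
    IntegrableOn y' (Set.Ioc 0 1) ∧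
    IntegrableOn (fun t => ((q t:ℂ) - lam) * y t) (Set.Ioc 0 1) ∧
    ContinuousOn y (Set.Icc 0 1) ∧ ContinuousOn y' (Set.Icc 0 1) := by
  obtain ⟨heq1, heq2⟩ := h
  set g : ℝ → ℂ := fun t => ((q t:ℂ) - lam) * y t with hgdef
  set m : ℝ → ℝ := fun t => 1 + ‖(q t:ℂ) - lam‖ with hmdef
  haveI : IsFiniteMeasure (volume.restrict (Set.Icc (0:ℝ) 1)) :=
    ⟨by rw [Measure.restrict_apply_univ]; exact measure_Icc_lt_top⟩
  have hqint : IntegrableOn q (Set.Icc 0 1) := hq.integrable one_le_two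
  have hqc : AEStronglyMeasurable (fun t => (q t:ℂ) - lam)
      (volume.restrict (Set.Icc (0:ℝ) 1)) :=
    (Complex.continuous_ofReal.comp_aestronglyMeasurable hq.1).sub aestronglyMeasurable_const
  have hnorm_q : ∀ t, ‖(q t:ℂ) - lam‖ ≤ |q t| + ‖lam‖ := fun t => by
    calc ‖(q t:ℂ) - lam‖ ≤ ‖(q t:ℂ)‖ + ‖lam‖ := norm_sub_le _ _
      _ = |q t| + ‖lam‖ := by rw [Complex.norm_real, Real.norm_eq_abs]
  have hm1 : ∀ t, 1 ≤ m t := fun t => le_add_of_nonneg_right (norm_nonneg _)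
  have hmnn : ∀ t, 0 ≤ m t := fun t => zero_le_one.trans (hm1 t)
  have hmint : IntegrableOn m (Set.Icc 0 1) := by
    refine Integrable.mono' ((integrable_const (1 + ‖lam‖)).add hqint.abs)
      (aestronglyMeasurable_const.add hqc.norm) ?_
    refine Filter.Eventually.of_forall (fun t => ?_)
    rw [Real.norm_eq_abs, abs_of_nonneg (hmnn t)]
    have := hnorm_q t
    simp only [Pi.add_apply]
    rw [hmdef]
    simp only []
    linarith
  have hmint' : IntegrableOn m (Set.Ioc 0 1) := hmint.mono_set Set.Ioc_subset_Icc_self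
  have hmib : IntervalIntegrable m volume 0 1 :=
    (intervalIntegrable_iff_integrableOn_Ioc_of_le zero_le_one).2 hmint'
  -- M monotone
  have hMb : ∀ x ∈ Set.Icc (0:ℝ) 1, (∫ t in (0:ℝ)..x, m t) ≤ ∫ t in (0:ℝ)..1, m t := by
    intro x hx
    have h1 : IntervalIntegrable m volume 0 x := hmib.mono_set (by
      rw [Set.uIcc_of_le hx.1, Set.uIcc_of_le zero_le_one]; exact Set.Icc_subset_Icc le_rfl hx.2)
    have h2 : IntervalIntegrable m volume x 1 := hmib.mono_set (by
      rw [Set.uIcc_of_le hx.2, Set.uIcc_of_le zero_le_one]; exact Set.Icc_subset_Icc hx.1 le_rfl)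
    have hadd := intervalIntegral.integral_add_adjacent_intervals h1 h2
    have hpos : 0 ≤ ∫ t in x..1, m t :=
      intervalIntegral.integral_nonneg hx.2 (fun t _ => hmnn t)
    linarith
  have hM0 : 0 ≤ ∫ t in (0:ℝ)..1, m t :=
    intervalIntegral.integral_nonneg zero_le_one (fun t _ => hmnn t)
  set A : ℝ := ‖y 0‖ + ‖y' 0‖ with hAdef
  have hA0 : 0 ≤ A := add_nonneg (norm_nonneg _) (norm_nonneg _)
  set K : ℝ := A * Real.exp (∫ t in (0:ℝ)..1, m t) with hKdef
  have hK0 : 0 ≤ K := mul_nonneg hA0 (Real.exp_nonneg _)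
  -- junk values
  have junk1 : ∀ x ∈ Set.Icc (0:ℝ) 1, ¬ IntegrableOn y' (Set.Ioc 0 x) → y x = y 0 := by
    intro x hx hni
    rw [heq1 x hx, intervalIntegral.integral_of_le hx.1, integral_undef hni, add_zero]
  have junk2 : ∀ x ∈ Set.Icc (0:ℝ) 1, ¬ IntegrableOn g (Set.Ioc 0 x) → y' x = y' 0 := by
    intro x hx hni
    rw [heq2 x hx, intervalIntegral.integral_of_le hx.1, integral_undef hni, add_zero]
  -- continuity from integrability
  have cont1 : ∀ x ∈ Set.Icc (0:ℝ) 1, IntegrableOn y' (Set.Ioc 0 x) →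
      ContinuousOn y (Set.Icc 0 x) := by
    intro x hx hi
    refine ContinuousOn.congr ((continuousOn_const (c := y 0)).add (cont_primitive hx.1 hi)) ?_
    intro z hz
    exact heq1 z ⟨hz.1, hz.2.trans hx.2⟩
  have cont2 : ∀ x ∈ Set.Icc (0:ℝ) 1, IntegrableOn g (Set.Ioc 0 x) →
      ContinuousOn y' (Set.Icc 0 x) := by
    intro x hx hi
    refine ContinuousOn.congr ((continuousOn_const (c := y' 0)).add (cont_primitive hx.1 hi)) ?_
    intro z hz
    exact heq2 z ⟨hz.1, hz.2.trans hx.2⟩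
  -- Gronwall bound on good region
  have good : ∀ x ∈ Set.Icc (0:ℝ) 1, IntegrableOn y' (Set.Ioc 0 x) →
      IntegrableOn g (Set.Ioc 0 x) → ‖y x‖ + ‖y' x‖ ≤ K := by
    intro x hx h1 h2
    have hcy := cont1 x hx h1
    have hcy' := cont2 x hx h2
    have hu : ContinuousOn (fun t => ‖y t‖ + ‖y' t‖) (Set.Icc 0 x) := hcy.norm.add hcy'.norm
    obtain ⟨B₀, hB₀⟩ := isCompact_Icc.exists_bound_of_continuousOn hu
    have hB : ∀ t ∈ Set.Icc (0:ℝ) x, ‖y t‖ + ‖y' t‖ ≤ max B₀ 0 := by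
      intro t ht
      have h' := hB₀ t ht
      rw [Real.norm_eq_abs] at h'
      exact (le_abs_self _).trans (h'.trans (le_max_left _ _))
    have hmx : IntegrableOn m (Set.Ioc 0 x) := hmint'.mono_set (Set.Ioc_subset_Ioc le_rfl hx.2)
    have hint' : ∀ z ∈ Set.Icc (0:ℝ) x,
        (‖y z‖ + ‖y' z‖) ≤ A + ∫ t in (0:ℝ)..z, m t * (‖y t‖ + ‖y' t‖) := by
      intro z hz
      have hz1 : z ∈ Set.Icc (0:ℝ) 1 := ⟨hz.1, hz.2.trans hx.2⟩
      have hy'z : IntegrableOn y' (Set.Ioc 0 z) := h1.mono_set (Set.Ioc_subset_Ioc le_rfl hz.2)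
      have hgz : IntegrableOn g (Set.Ioc 0 z) := h2.mono_set (Set.Ioc_subset_Ioc le_rfl hz.2)
      have hy'zi : IntervalIntegrable y' volume 0 z :=
        (intervalIntegrable_iff_integrableOn_Ioc_of_le hz.1).2 hy'z
      have hgzi : IntervalIntegrable g volume 0 z :=
        (intervalIntegrable_iff_integrableOn_Ioc_of_le hz.1).2 hgz
      have n1 : ‖∫ t in (0:ℝ)..z, y' t‖ ≤ ∫ t in (0:ℝ)..z, ‖y' t‖ :=
        intervalIntegral.norm_integral_le_integral_norm hz.1
      have n2 : ‖∫ t in (0:ℝ)..z, g t‖ ≤ ∫ t in (0:ℝ)..z, ‖g t‖ :=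
        intervalIntegral.norm_integral_le_integral_norm hz.1
      have e12 : ‖y z‖ + ‖y' z‖ ≤ A + ((∫ t in (0:ℝ)..z, ‖y' t‖) + ∫ t in (0:ℝ)..z, ‖g t‖) := by
        rw [heq1 z hz1, heq2 z hz1, hAdef]
        have l1 := norm_add_le (y 0) (∫ t in (0:ℝ)..z, y' t)
        have l2 := norm_add_le (y' 0) (∫ t in (0:ℝ)..z, g t)
        linarith
      have esum : (∫ t in (0:ℝ)..z, ‖y' t‖) + (∫ t in (0:ℝ)..z, ‖g t‖)
          = ∫ t in (0:ℝ)..z, (‖y' t‖ + ‖g t‖) :=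
        (intervalIntegral.integral_add hy'zi.norm hgzi.norm).symm
      have hcyz : ContinuousOn (fun t => ‖y t‖ + ‖y' t‖) (Set.Icc 0 z) :=
        hu.mono (Set.Icc_subset_Icc le_rfl hz.2)
      have hmz : IntegrableOn m (Set.Ioc 0 z) := hmx.mono_set (Set.Ioc_subset_Ioc le_rfl hz.2)
      have hmu_int : IntervalIntegrable (fun t => m t * (‖y t‖ + ‖y' t‖)) volume 0 z :=
        (intervalIntegrable_iff_integrableOn_Ioc_of_le hz.1).2
          (mul_cont_integrable hz.1 hmz hcyz)
      have emono : (∫ t in (0:ℝ)..z, (‖y' t‖ + ‖g t‖))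
          ≤ ∫ t in (0:ℝ)..z, m t * (‖y t‖ + ‖y' t‖) := by
        refine intervalIntegral.integral_mono_on hz.1 (hy'zi.norm.add hgzi.norm) hmu_int ?_
        intro t _
        have hgn : ‖g t‖ = ‖(q t:ℂ) - lam‖ * ‖y t‖ := norm_mul _ _
        have h1' := norm_nonneg (y t)
        have h2' := norm_nonneg (y' t)
        have h3' := norm_nonneg ((q t:ℂ) - lam)
        rw [hgn, hmdef]
        simp only []
        nlinarith
      linarith
    have hgr := gronwall hx.1 hu hmx hm1 hA0 (le_max_right B₀ 0) hB hint' x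
      (Set.right_mem_Icc.2 hx.1)
    refine hgr.trans ?_
    rw [hKdef]
    exact mul_le_mul_of_nonneg_left (Real.exp_le_exp.2 (hMb x hx)) hA0
  -- bound for y on the T2 region
  have bY_pre : ∀ s ∈ Set.Icc (0:ℝ) 1, IntegrableOn g (Set.Ioc 0 s) → ‖y s‖ ≤ K + ‖y 0‖ := by
    intro s hs h2
    by_cases h1 : IntegrableOn y' (Set.Ioc 0 s)
    · have hg' := good s hs h1 h2
      have := norm_nonneg (y' s)
      have := norm_nonneg (y 0)
      linarith
    · rw [junk1 s hs h1]
      linarith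
  -- global bound for y'
  set C₁ : ℝ := ‖y' 0‖ + (K + ‖y 0‖) * (∫ t in (0:ℝ)..1, m t) with hC₁def
  have hKy0 : 0 ≤ K + ‖y 0‖ := add_nonneg hK0 (norm_nonneg _)
  have bY' : ∀ t ∈ Set.Icc (0:ℝ) 1, ‖y' t‖ ≤ C₁ := by
    intro t ht
    by_cases h2 : IntegrableOn g (Set.Ioc 0 t)
    · have hgi : IntervalIntegrable g volume 0 t :=
        (intervalIntegrable_iff_integrableOn_Ioc_of_le ht.1).2 h2
      have hmt : IntegrableOn m (Set.Ioc 0 t) := hmint'.mono_set (Set.Ioc_subset_Ioc le_rfl ht.2)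
      have hmti : IntervalIntegrable m volume 0 t :=
        (intervalIntegrable_iff_integrableOn_Ioc_of_le ht.1).2 hmt
      have n2 : ‖∫ s in (0:ℝ)..t, g s‖ ≤ ∫ s in (0:ℝ)..t, ‖g s‖ :=
        intervalIntegral.norm_integral_le_integral_norm ht.1
      have emono : (∫ s in (0:ℝ)..t, ‖g s‖) ≤ ∫ s in (0:ℝ)..t, m s * (K + ‖y 0‖) := by
        refine intervalIntegral.integral_mono_on ht.1 hgi.norm (hmti.mul_const _) ?_
        intro s hs
        have hs1 : s ∈ Set.Icc (0:ℝ) 1 := ⟨hs.1, hs.2.trans ht.2⟩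
        have hys : ‖y s‖ ≤ K + ‖y 0‖ :=
          bY_pre s hs1 (h2.mono_set (Set.Ioc_subset_Ioc le_rfl hs.2))
        have hgn : ‖g s‖ = ‖(q s:ℂ) - lam‖ * ‖y s‖ := norm_mul _ _
        have hqm : ‖(q s:ℂ) - lam‖ ≤ m s := by
          rw [hmdef]; simp only []; linarith [norm_nonneg ((q s:ℂ) - lam)]
        rw [hgn]
        exact mul_le_mul hqm hys (norm_nonneg _) (hmnn s)
      have eint : (∫ s in (0:ℝ)..t, m s * (K + ‖y 0‖))
          = (∫ s in (0:ℝ)..t, m s) * (K + ‖y 0‖) := intervalIntegral.integral_mul_const _ _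
      have hMt := hMb t ht
      rw [heq2 t ht]
      calc ‖y' 0 + ∫ s in (0:ℝ)..t, g s‖ ≤ ‖y' 0‖ + ‖∫ s in (0:ℝ)..t, g s‖ := norm_add_le _ _
        _ ≤ ‖y' 0‖ + (∫ s in (0:ℝ)..t, m s) * (K + ‖y 0‖) := by
            rw [eint] at emono; linarith
        _ ≤ C₁ := by rw [hC₁def]; nlinarith
    · rw [junk2 t ht h2, hC₁def]
      nlinarith
  -- y' is integrable on (0,1]
  have haesm_y' : AEStronglyMeasurable y' (volume.restrict (Set.Ioc (0:ℝ) 1)) := by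
    have hP := prim_aesm g
    refine ((aestronglyMeasurable_const (b := y' 0)).add hP).congr ?_
    rw [Filter.EventuallyEq, ae_restrict_iff' measurableSet_Ioc]
    exact Filter.Eventually.of_forall (fun x hx => (heq2 x ⟨hx.1.le, hx.2⟩).symm)
  have hT1 : IntegrableOn y' (Set.Ioc 0 1) := by
    refine Integrable.mono' (integrable_const C₁) haesm_y' ?_
    rw [ae_restrict_iff' measurableSet_Ioc]
    exact Filter.Eventually.of_forall (fun x hx => bY' x ⟨hx.1.le, hx.2⟩)
  have hIcc1 : (1:ℝ) ∈ Set.Icc (0:ℝ) 1 := Set.right_mem_Icc.2 zero_le_one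
  have hconty : ContinuousOn y (Set.Icc 0 1) := cont1 1 hIcc1 hT1
  have hT2 : IntegrableOn g (Set.Ioc 0 1) := by
    obtain ⟨C₀, hC₀⟩ := isCompact_Icc.exists_bound_of_continuousOn hconty
    have haesm_y : AEStronglyMeasurable y (volume.restrict (Set.Ioc (0:ℝ) 1)) :=
      (hconty.aestronglyMeasurable measurableSet_Icc).mono_measure
        (Measure.restrict_mono Set.Ioc_subset_Icc_self le_rfl)
    have haesm_g : AEStronglyMeasurable g (volume.restrict (Set.Ioc (0:ℝ) 1)) :=
      (hqc.mono_measure (Measure.restrict_mono Set.Ioc_subset_Icc_self le_rfl)).mul haesm_y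
    refine Integrable.mono' ((hmint'.mul_const (max C₀ 0)) : IntegrableOn
      (fun t => m t * max C₀ 0) _ _) haesm_g ?_
    rw [ae_restrict_iff' measurableSet_Ioc]
    refine Filter.Eventually.of_forall (fun t ht => ?_)
    have hyt : ‖y t‖ ≤ max C₀ 0 := (hC₀ t (Set.Ioc_subset_Icc_self ht)).trans (le_max_left _ _)
    have hgn : ‖g t‖ = ‖(q t:ℂ) - lam‖ * ‖y t‖ := norm_mul _ _
    have hqm : ‖(q t:ℂ) - lam‖ ≤ m t := by
      rw [hmdef]; simp only []; linarith [norm_nonneg ((q t:ℂ) - lam)]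
    rw [hgn]
    exact mul_le_mul hqm hyt (norm_nonneg _) (hmnn t)
  exact ⟨hT1, hT2, hconty, cont2 1 hIcc1 hT2⟩

/-- constancy of the Wronskian of two solutions. -/
lemma wronskian (q : ℝ → ℝ) (hq : MemLp q 2 (volume.restrict (Set.Icc (0:ℝ) 1)))
    (lam : ℂ) (y1 y1' y2 y2' : ℝ → ℂ)
    (h1 : IsSol q lam y1 y1') (h2 : IsSol q lam y2 y2') :
    y1 1 * y2' 1 - y1' 1 * y2 1 = y1 0 * y2' 0 - y1' 0 * y2 0 := by
  obtain ⟨r1, r2, r3, r4⟩ := regular q hq lam y1 y1' h1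
  obtain ⟨s1, s2, s3, s4⟩ := regular q hq lam y2 y2' h2
  have e1 := ibp zero_le_one r1 s2 h1.1 h2.2
  have e2 := ibp zero_le_one r2 s1 h1.2 h2.1
  have ecg : (∫ t in (0:ℝ)..1, (y1' t * y2' t + y1 t * (((q t:ℂ) - lam) * y2 t)))
      = ∫ t in (0:ℝ)..1, ((((q t:ℂ) - lam) * y1 t) * y2 t + y1' t * y2' t) :=
    intervalIntegral.integral_congr (fun t _ => by ring)
  rw [e1, e2, ecg]
  ring

/-- the reflected solution for an even potential. -/
lemma reflect (q : ℝ → ℝ) (hq : MemLp q 2 (volume.restrict (Set.Icc (0:ℝ) 1)))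
    (heven : ∀ᵐ x ∂(volume.restrict (Set.Icc (0:ℝ) 1)), q (1 - x) = q x)
    (lam : ℂ) (y y' : ℝ → ℂ) (h : IsSol q lam y y') :
    IsSol q lam (fun x => y (1 - x)) (fun x => -y' (1 - x)) := by
  obtain ⟨r1, r2, r3, r4⟩ := regular q hq lam y y' h
  have hii1 : IntervalIntegrable y' volume 0 1 :=
    (intervalIntegrable_iff_integrableOn_Ioc_of_le zero_le_one).2 r1
  have hii2 : IntervalIntegrable (fun t => ((q t:ℂ) - lam) * y t) volume 0 1 :=
    (intervalIntegrable_iff_integrableOn_Ioc_of_le zero_le_one).2 r2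
  have hsub : ∀ x ∈ Set.Icc (0:ℝ) 1, (1:ℝ) - x ∈ Set.Icc (0:ℝ) 1 := by
    intro x hx; exact ⟨by linarith [hx.2], by linarith [hx.1]⟩
  have hadj : ∀ (F : ℝ → ℂ), IntervalIntegrable F volume 0 1 →
      ∀ x ∈ Set.Icc (0:ℝ) 1,
      (∫ t in (0:ℝ)..1, F t) - ∫ t in (0:ℝ)..(1-x), F t = ∫ t in (1-x)..1, F t := by
    intro F hF x hx
    have h1 : IntervalIntegrable F volume 0 (1-x) := hF.mono_set (by
      rw [Set.uIcc_of_le (hsub x hx).1, Set.uIcc_of_le zero_le_one]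
      exact Set.Icc_subset_Icc le_rfl (hsub x hx).2)
    have h2 : IntervalIntegrable F volume (1-x) 1 := hF.mono_set (by
      rw [Set.uIcc_of_le (hsub x hx).2, Set.uIcc_of_le zero_le_one]
      exact Set.Icc_subset_Icc (hsub x hx).1 le_rfl)
    have := intervalIntegral.integral_add_adjacent_intervals h1 h2
    linear_combination -this
  constructor
  · intro x hx
    have hx' := hsub x hx
    have c1 : (∫ t in (0:ℝ)..x, -y' (1-t)) = -∫ t in (0:ℝ)..x, y' (1-t) :=
      intervalIntegral.integral_neg
    have c2 : (∫ t in (0:ℝ)..x, y' (1-t)) = ∫ t in (1-x)..(1-0:ℝ), y' t :=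
      intervalIntegral.integral_comp_sub_left y' 1
    have ea := h.1 1 (Set.right_mem_Icc.2 zero_le_one)
    have eb := h.1 (1-x) hx'
    have ec := hadj y' hii1 x hx
    simp only [sub_zero] at c2
    rw [c1, c2, ← ec]
    beta_reduce
    rw [show (1:ℝ)-0 = 1 by norm_num, ea, eb]
    ring
  · intro x hx
    have hx' := hsub x hx
    -- a.e. substitution of q (1-t) for q t
    have hae : ∀ᵐ t ∂volume, t ∈ Set.uIoc (0:ℝ) x → ((q t:ℂ) - lam) * y (1-t)
        = ((q (1-t):ℂ) - lam) * y (1-t) := by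
      have h0 := (ae_restrict_iff' measurableSet_Icc).1 heven
      filter_upwards [h0] with t h0t ht
      have ht' : t ∈ Set.Icc (0:ℝ) 1 := by
        rcases Set.uIoc_subset_uIcc ht with h'
        rw [Set.uIcc_of_le hx.1] at h'
        exact ⟨h'.1, h'.2.trans hx.2⟩
      rw [h0t ht']
    have c0 : (∫ t in (0:ℝ)..x, ((q t:ℂ) - lam) * y (1-t))
        = ∫ t in (0:ℝ)..x, ((q (1-t):ℂ) - lam) * y (1-t) :=
      intervalIntegral.integral_congr_ae hae
    have c2 : (∫ t in (0:ℝ)..x, ((q (1-t):ℂ) - lam) * y (1-t))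
        = ∫ t in (1-x)..(1-0:ℝ), ((q t:ℂ) - lam) * y t :=
      intervalIntegral.integral_comp_sub_left (fun t => ((q t:ℂ) - lam) * y t) 1
    have ea := h.2 1 (Set.right_mem_Icc.2 zero_le_one)
    have eb := h.2 (1-x) hx'
    have ec := hadj (fun t => ((q t:ℂ) - lam) * y t) hii2 x hx
    simp only [sub_zero] at c2
    rw [c0, c2, ← ec]
    beta_reduce
    rw [show (1:ℝ)-0 = 1 by norm_num, ea, eb]
    ring

end Aux

/-- if `q` is even, i.e. `q(1−x) = q(x)` a.e. on `[0,1]`, then for every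
`λ ∈ ℂ` one has `ϑ(1,λ) = φ′(1,λ) = Δ(λ)` and consequently `Δ₀(λ) = (9·Δ(λ)² − 5)/4`. -/
theorem lyapunov_of_even_potential
    (q : ℝ → ℝ) (hq : MemLp q 2 (volume.restrict (Set.Icc (0:ℝ) 1)))
    (heven : ∀ᵐ x ∂(volume.restrict (Set.Icc (0:ℝ) 1)), q (1 - x) = q x)
    (lam : ℂ) (th th' ph ph' : ℝ → ℂ)
    (hth : IsSol q lam th th') (hth0 : th 0 = 1) (hth'0 : th' 0 = 0)
    (hph : IsSol q lam ph ph') (hph0 : ph 0 = 0) (hph'0 : ph' 0 = 1) :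
    th 1 = ph' 1 ∧ th 1 = (ph' 1 + th 1) / 2 ∧
    2 * ((ph' 1 + th 1) / 2) ^ 2 + th' 1 * ph 1 / 4 - 1 =
      (9 * ((ph' 1 + th 1) / 2) ^ 2 - 5) / 4 := by
  have hrefl := reflect q hq heven lam th th' hth
  have W1 := wronskian q hq lam _ _ ph ph' hrefl hph
  have W2 := wronskian q hq lam th th' ph ph' hth hph
  beta_reduce at W1
  rw [show (1:ℝ)-1 = 0 by norm_num, show (1:ℝ)-0 = 1 by norm_num] at W1
  rw [hth0, hth'0, hph0, hph'0] at W1 W2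
  have e : th 1 = ph' 1 := by linear_combination -W1
  refine ⟨e, by rw [← e]; ring, ?_⟩
  rw [← e] at W2 ⊢
  linear_combination (-1/4 : ℂ) * W2

end
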